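/- (Closed-form V-update, case I_i = 1, |w| < √tr.) Let tr > 0, ρ > 0, w ∈ ℝ with w² < tr, and define g(v) = (T(v²) − 1)² + (ρ/2)(v − w)² for v ∈ ℝ. If (ρ/2)(√tr − |w|)² > 1, then v = w is the unique global minimizer of g, with g(w) = 1. If (ρ/2)(√tr − |w|)² < 1, then v* = √tr (when w ≥ 0) resp. v* = −√tr (when w < 0) is a global minimizer of g, with g(v*) = (ρ/2)(√tr − |w|)². -/
import Mathlib


/-- The hard threshold function `T(x) = 1` if `x ≥ tr`, `T(x) = 0` if `x < tr`. -/
noncomputable def hardT (tr x : ℝ) : ℝ := if tr ≤ x then 1 else 0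

/-- The scalar V-subproblem objective `g(v) = (T(v²) − c)² + (ρ/2)(v − w)²`. -/
noncomputable def gObj (tr ρ w c v : ℝ) : ℝ :=
  (hardT tr (v ^ 2) - c) ^ 2 + (ρ / 2) * (v - w) ^ 2

lemma key_ineq (tr w v : ℝ) (hw : w ^ 2 < tr) (hv : tr ≤ v ^ 2) :
    (Real.sqrt tr - |w|) ^ 2 ≤ (v - w) ^ 2 := by
  have h1 : Real.sqrt tr ≤ |v| := by
    have := Real.sqrt_le_sqrt hv
    rwa [Real.sqrt_sq_eq_abs] at this
  have h2 : |w| < Real.sqrt tr := by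
    rw [show |w| = Real.sqrt (w ^ 2) by rw [Real.sqrt_sq_eq_abs]]
    exact Real.sqrt_lt_sqrt (by positivity) hw
  have h3 : 0 ≤ Real.sqrt tr - |w| := by linarith
  have h4 : Real.sqrt tr - |w| ≤ |v - w| := by
    have := abs_sub_abs_le_abs_sub v w
    linarith
  calc (Real.sqrt tr - |w|) ^ 2 ≤ |v - w| ^ 2 := by
        apply pow_le_pow_left₀ h3 h4
    _ = (v - w) ^ 2 := sq_abs _

/-- Closed-form V-update, case `I_i = 1`, `|w| < √tr`. If `(ρ/2)(√tr − |w|)² > 1`,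
then `v = w` is the unique global minimizer of `g`, with `g(w) = 1`; if
`(ρ/2)(√tr − |w|)² < 1`, then `v* = √tr·sgn(w)` (i.e. `√tr` when `w ≥ 0`, `−√tr`
when `w < 0`) is a global minimizer of `g`, with `g(v*) = (ρ/2)(√tr − |w|)²`. -/
theorem Vupdate_case_one_small (tr ρ w : ℝ) (htr : 0 < tr) (hρ : 0 < ρ)
    (hw : w ^ 2 < tr) :
    ((ρ / 2) * (Real.sqrt tr - |w|) ^ 2 > 1 →
      gObj tr ρ w 1 w = 1 ∧ ∀ v : ℝ, v ≠ w → gObj tr ρ w 1 w < gObj tr ρ w 1 v) ∧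
    ((ρ / 2) * (Real.sqrt tr - |w|) ^ 2 < 1 →
      (0 ≤ w →
        gObj tr ρ w 1 (Real.sqrt tr) = (ρ / 2) * (Real.sqrt tr - |w|) ^ 2 ∧
          ∀ v : ℝ, gObj tr ρ w 1 (Real.sqrt tr) ≤ gObj tr ρ w 1 v) ∧
      (w < 0 →
        gObj tr ρ w 1 (-Real.sqrt tr) = (ρ / 2) * (Real.sqrt tr - |w|) ^ 2 ∧
          ∀ v : ℝ, gObj tr ρ w 1 (-Real.sqrt tr) ≤ gObj tr ρ w 1 v)) := by
  have hst : Real.sqrt tr ^ 2 = tr := Real.sq_sqrt htr.le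
  have hgw : gObj tr ρ w 1 w = 1 := by
    simp [gObj, hardT, not_le.mpr hw]
  have hglow : ∀ v : ℝ, ¬ tr ≤ v ^ 2 →
      gObj tr ρ w 1 v = 1 + (ρ / 2) * (v - w) ^ 2 := by
    intro v hv; simp [gObj, hardT, hv]
  have hghigh : ∀ v : ℝ, tr ≤ v ^ 2 →
      gObj tr ρ w 1 v = (ρ / 2) * (v - w) ^ 2 := by
    intro v hv; simp [gObj, hardT, hv]
  have hgst : gObj tr ρ w 1 (Real.sqrt tr)
      = (ρ / 2) * (Real.sqrt tr - w) ^ 2 := hghigh _ (le_of_eq hst.symm)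
  have hgnst : gObj tr ρ w 1 (-Real.sqrt tr)
      = (ρ / 2) * (-Real.sqrt tr - w) ^ 2 := by
    apply hghigh; rw [neg_pow]; simp [hst]
  refine ⟨?_, ?_⟩
  · intro hbig
    refine ⟨hgw, fun v hv => ?_⟩
    rw [hgw]
    by_cases hc : tr ≤ v ^ 2
    · rw [hghigh v hc]
      have := key_ineq tr w v hw hc
      nlinarith
    · rw [hglow v hc]
      have hne : v - w ≠ 0 := sub_ne_zero.mpr hv
      have : (v - w) ^ 2 > 0 := pow_pos (abs_pos.mpr hne) 2 |>.trans_eq (sq_abs _)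
      nlinarith
  · intro hsmall
    have lower : ∀ v : ℝ, (ρ / 2) * (Real.sqrt tr - |w|) ^ 2 ≤ gObj tr ρ w 1 v := by
      intro v
      by_cases hc : tr ≤ v ^ 2
      · rw [hghigh v hc]
        have := key_ineq tr w v hw hc
        nlinarith
      · rw [hglow v hc]
        nlinarith [sq_nonneg (v - w)]
    constructor
    · intro hw0
      have heq : gObj tr ρ w 1 (Real.sqrt tr) = (ρ / 2) * (Real.sqrt tr - |w|) ^ 2 := by
        rw [hgst, abs_of_nonneg hw0]
      exact ⟨heq, fun v => heq ▸ lower v⟩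
    · intro hw0
      have heq : gObj tr ρ w 1 (-Real.sqrt tr) = (ρ / 2) * (Real.sqrt tr - |w|) ^ 2 := by
        rw [hgnst, abs_of_neg hw0]; ring_nf
      exact ⟨heq, fun v => heq ▸ lower v⟩
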